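/- arXiv:2104.07752 — 4 statements merged into one kernel-verified Lean document; each statement's English description precedes it below -/
import Mathlib

section
/- Let X be a p-variate random vector with law μ. A probability measure λ on ℝ^{2p} is the law of (X, X̃) for some knockoff copy X̃ of X if and only if there exists a probability measure π on ℝ^{2p} such that λ = 2^{-p} Σ_{f ∈ F} π ∘ f⁻¹ and 2^{-p} Σ_{f ∈ F} π{x ∈ ℝ^{2p} : f(x) ∈ A × ℝ^p} = μ(A) for every Borel set A ⊆ ℝ^p. -/
open MeasureTheory Set ENNReal
open scoped symmDiff

/-! An `F`-invariant `λ` is its own average `2^{-p} ∑_f λ ∘ f⁻¹`, so `π = λ` works. Conversely, since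
`f_T ∘ f_S = f_{S ∆ T}`, composing with `f_T` only permutes the family `F`, so the average of any `π`
is `F`-invariant; its first marginal is exactly the averaged quantity in the statement. -/

/-- The swap map `f_S` on `ℝ^p × ℝ^p`. -/
noncomputable def swapMap (p : ℕ) (S : Finset (Fin p)) :
    ((Fin p → ℝ) × (Fin p → ℝ)) → ((Fin p → ℝ) × (Fin p → ℝ)) :=
  fun z => (fun i => if i ∈ S then z.2 i else z.1 i,
            fun i => if i ∈ S then z.1 i else z.2 i)

namespace MeasureTheory.Measure

variable {ι α : Type*} [Fintype ι] [MeasurableSpace α]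

noncomputable def familyAverage (f : ι → α → α) (π : Measure α) : Measure α :=
  (Fintype.card ι : ℝ≥0∞)⁻¹ • ∑ i, π.map (f i)

lemma familyAverage_apply {f : ι → α → α} (hf : ∀ i, Measurable (f i)) (π : Measure α)
    {s : Set α} (hs : MeasurableSet s) :
    familyAverage f π s = (Fintype.card ι : ℝ≥0∞)⁻¹ * ∑ i, π (f i ⁻¹' s) := by
  simp only [familyAverage, smul_apply, finsetSum_apply, map_apply (hf _) hs, smul_eq_mul]

lemma familyAverage_eq_self [Nonempty ι] {f : ι → α → α} {π : Measure α}
    (hπ : ∀ i, π.map (f i) = π) : familyAverage f π = π := by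
  rw [familyAverage, Finset.sum_congr rfl fun i _ => hπ i, Finset.sum_const, Finset.card_univ,
    ← Nat.cast_smul_eq_nsmul ℝ≥0∞, smul_smul,
    ENNReal.inv_mul_cancel (Nat.cast_ne_zero.2 Fintype.card_ne_zero) (natCast_ne_top _), one_smul]

lemma map_familyAverage {f : ι → α → α} (hf : ∀ i, Measurable (f i))
    (hcomp : ∀ j, ∃ σ : Equiv.Perm ι, ∀ i, f j ∘ f i = f (σ i)) (π : Measure α) (j : ι) :
    (familyAverage f π).map (f j) = familyAverage f π := by
  obtain ⟨σ, hσ⟩ := hcomp j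
  simp only [familyAverage, Measure.map_smul]
  rw [map_finset_sum' (hf j).aemeasurable]
  simp_rw [map_map (hf j) (hf _), hσ]
  rw [Equiv.sum_comp σ fun i => π.map (f i)]

end MeasureTheory.Measure

lemma measurable_swapMap (p : ℕ) (S : Finset (Fin p)) : Measurable (swapMap p S) := by
  refine .prodMk (measurable_pi_lambda _ fun i => ?_) (measurable_pi_lambda _ fun i => ?_) <;>
    split_ifs <;> fun_prop

lemma swapMap_comp_swapMap (p : ℕ) (S T : Finset (Fin p)) :
    swapMap p T ∘ swapMap p S = swapMap p (S ∆ T) := by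
  funext z
  simp only [Function.comp_apply, swapMap, Prod.mk.injEq]
  constructor <;> funext i <;> by_cases hS : i ∈ S <;> by_cases hT : i ∈ T <;>
    simp [Finset.mem_symmDiff, hS, hT]

lemma familyAverage_swapMap (p : ℕ) (π : Measure ((Fin p → ℝ) × (Fin p → ℝ))) :
    π.familyAverage (swapMap p) = ((2 : ℝ≥0∞) ^ p)⁻¹ • ∑ S, π.map (swapMap p S) := by
  rw [Measure.familyAverage, Fintype.card_finset, Fintype.card_fin, Nat.cast_pow, Nat.cast_ofNat]

theorem knockoff_characterization_general (p : ℕ)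
    (μX : Measure (Fin p → ℝ))
    (lam : Measure ((Fin p → ℝ) × (Fin p → ℝ))) [IsProbabilityMeasure lam] :
    ((∀ S : Finset (Fin p), lam.map (swapMap p S) = lam) ∧ lam.map Prod.fst = μX) ↔
    ∃ π : Measure ((Fin p → ℝ) × (Fin p → ℝ)), IsProbabilityMeasure π ∧
      lam = ((2 : ℝ≥0∞) ^ p)⁻¹ • ∑ S : Finset (Fin p), π.map (swapMap p S) ∧
      ∀ A : Set (Fin p → ℝ), MeasurableSet A →
        ((2 : ℝ≥0∞) ^ p)⁻¹ *
          ∑ S : Finset (Fin p), π {z | (swapMap p S z).1 ∈ A} = μX A := by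
  have hcomp : ∀ T, ∃ σ : Equiv.Perm (Finset (Fin p)), ∀ S,
      swapMap p T ∘ swapMap p S = swapMap p (σ S) :=
    fun T => ⟨(symmDiff_left_involutive T).toPerm, fun S => swapMap_comp_swapMap p S T⟩
  have hmarg : ∀ (π : Measure ((Fin p → ℝ) × (Fin p → ℝ))) A, MeasurableSet A →
      (π.familyAverage (swapMap p)).map Prod.fst A =
        ((2 : ℝ≥0∞) ^ p)⁻¹ * ∑ S, π {z | (swapMap p S z).1 ∈ A} := fun π A hA => by
    rw [Measure.map_apply measurable_fst hA,
      Measure.familyAverage_apply (measurable_swapMap p) π (measurable_fst hA),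
      Fintype.card_finset, Fintype.card_fin, Nat.cast_pow, Nat.cast_ofNat]
    rfl
  simp only [← familyAverage_swapMap]
  constructor
  · rintro ⟨hinv, rfl⟩
    refine ⟨lam, inferInstance, (Measure.familyAverage_eq_self hinv).symm, fun A hA => ?_⟩
    rw [← hmarg lam A hA, Measure.familyAverage_eq_self hinv]
  · rintro ⟨π, -, rfl, hμ⟩
    refine ⟨Measure.map_familyAverage (measurable_swapMap p) hcomp π, Measure.ext fun A hA => ?_⟩
    rw [hmarg π A hA, hμ A hA]

/-- Characterization of knockoff distributions: `λ` is the law of `(X, X̃)` for some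
knockoff copy `X̃` of `X` (i.e. `λ` is `F`-invariant and its first-`p`-coordinate marginal
is `μ = L(X)`) iff there is a probability `π` with `λ = 2^{-p} ∑_{f ∈ F} π ∘ f⁻¹` and
`2^{-p} ∑_{f ∈ F} π {x : f(x) ∈ A × ℝ^p} = μ(A)` for all Borel `A`. -/
theorem knockoff_characterization (p : ℕ) (hp : 2 ≤ p)
    (μX : Measure (Fin p → ℝ)) [IsProbabilityMeasure μX]
    (lam : Measure ((Fin p → ℝ) × (Fin p → ℝ))) [IsProbabilityMeasure lam] :
    ((∀ S : Finset (Fin p), lam.map (swapMap p S) = lam) ∧ lam.map Prod.fst = μX) ↔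
    ∃ π : Measure ((Fin p → ℝ) × (Fin p → ℝ)), IsProbabilityMeasure π ∧
      lam = ((2 : ℝ≥0∞) ^ p)⁻¹ • ∑ S : Finset (Fin p), π.map (swapMap p S) ∧
      ∀ A : Set (Fin p → ℝ), MeasurableSet A →
        ((2 : ℝ≥0∞) ^ p)⁻¹ *
          ∑ S : Finset (Fin p), π {z | (swapMap p S z).1 ∈ A} = μX A :=
  knockoff_characterization_general p μX lam
end

section
/- Let p = 2, C(u₁,u₂) = max(u₁+u₂−1, 0) (the lower Fréchet copula), D₁ = C, and D₂ any 2-copula. Then lim_{x₄→∞} H(x) = max(F₁(x₁)+F₁(x₃)+F₂(x₂)−2, 0), which is not a distribution function on ℝ³ (e.g., it can fail rectangle monotonicity), hence H is not a distribution function on ℝ⁴. -/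
/-!
Letting `x₄ → ∞` in a distribution function on `ℝ⁴` gives the distribution function of the first
three coordinates. Since a copula `D` satisfies `u + v - 1 ≤ D u v ≤ u`, we get `D u v → u` as
`v → 1`, so that limit is `max (F₁ x₁ + F₂ x₂ + F₁ x₃ - 2) 0`. With continuous marginals pick
`a₁, a₂` with `F₁ a₁ = F₂ a₂ = 1/2` and `b₁, b₂` with `F₁ b₁, F₂ b₂ > 11/12`. The three orthants
obtained from `(b₁, b₂, b₁)` by lowering one coordinate to `a₁`, resp. `a₂`, each have mass
`> 1/3`, while any two of them meet inside an orthant of mass `0`: impossible for a probability.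
-/

open MeasureTheory Set Filter

/-- A `2`-copula, in curried form. -/
def IsCopula2 (D : ℝ → ℝ → ℝ) : Prop :=
  ∃ μ : Measure (ℝ × ℝ), IsProbabilityMeasure μ ∧
    μ.map Prod.fst = volume.restrict (Set.Ioo (0:ℝ) 1) ∧
    μ.map Prod.snd = volume.restrict (Set.Ioo (0:ℝ) 1) ∧
    ∀ u v, D u v = (μ {y | y.1 ≤ u ∧ y.2 ≤ v}).toReal

open ProbabilityTheory Topology

lemma measureReal_setOf_le_of_map_eq_uniform {Ω : Type*} [MeasurableSpace Ω] {μ : Measure Ω}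
    {f : Ω → ℝ} (hf : Measurable f) (hμ : μ.map f = volume.restrict (Ioo 0 1)) {u : ℝ}
    (hu : u ∈ Icc 0 1) : μ.real {ω | f ω ≤ u} = u := by
  change μ.real (f ⁻¹' Iic u) = u
  rw [← map_measureReal_apply hf measurableSet_Iic, hμ,
    Measure.restrict_congr_set Ioo_ae_eq_Ioc, measureReal_restrict_apply measurableSet_Iic,
    Iic_inter_Ioc_of_le hu.2, Real.volume_real_Ioc_of_le hu.1, sub_zero]

lemma IsCopula2.add_sub_one_le_and_le_left {D : ℝ → ℝ → ℝ} (hD : IsCopula2 D) {u v : ℝ}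
    (hu : u ∈ Icc 0 1) (hv : v ∈ Icc 0 1) : u + v - 1 ≤ D u v ∧ D u v ≤ u := by
  obtain ⟨μ, _, hfst, hsnd, hDμ⟩ := hD
  have hμu := measureReal_setOf_le_of_map_eq_uniform measurable_fst hfst hu
  have hμv := measureReal_setOf_le_of_map_eq_uniform measurable_snd hsnd hv
  have hincl_excl := measureReal_union_add_inter (μ := μ) (s := {y : ℝ × ℝ | y.1 ≤ u})
    (measurableSet_le measurable_snd measurable_const : MeasurableSet {y : ℝ × ℝ | y.2 ≤ v})
  have hunion : μ.real ({y : ℝ × ℝ | y.1 ≤ u} ∪ {y | y.2 ≤ v}) ≤ 1 := measureReal_le_one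
  have hinter : μ.real ({y : ℝ × ℝ | y.1 ≤ u} ∩ {y | y.2 ≤ v}) ≤ μ.real {y : ℝ × ℝ | y.1 ≤ u} :=
    measureReal_mono inter_subset_left
  have hDuv : D u v = μ.real ({y : ℝ × ℝ | y.1 ≤ u} ∩ {y | y.2 ≤ v}) := hDμ u v
  rw [hDuv]
  exact ⟨by linarith, by linarith⟩

lemma IsCopula2.tendsto_of_tendsto_one {α : Type*} {D : ℝ → ℝ → ℝ} (hD : IsCopula2 D) {u : ℝ}
    (hu : u ∈ Icc 0 1) {l : Filter α} {g : α → ℝ} (hg : ∀ a, g a ∈ Icc 0 1)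
    (hlim : Tendsto g l (𝓝 1)) : Tendsto (fun a => D u (g a)) l (𝓝 u) := by
  have hlower : Tendsto (fun a => u + g a - 1) l (𝓝 u) := by
    simpa using (hlim.const_add u).sub_const 1
  exact tendsto_of_tendsto_of_tendsto_of_le_of_le hlower tendsto_const_nhds
    (fun a => (hD.add_sub_one_le_and_le_left hu (hg a)).1)
    (fun a => (hD.add_sub_one_le_and_le_left hu (hg a)).2)

lemma tendsto_lowerFrechet_copula {α : Type*} {D : ℝ → ℝ → ℝ} (hD : IsCopula2 D) (s : ℝ)
    {w : ℝ} (hw : w ∈ Icc 0 1) {l : Filter α} {g : α → ℝ} (hg : ∀ a, g a ∈ Icc 0 1)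
    (hlim : Tendsto g l (𝓝 1)) :
    Tendsto (fun a => max (max (s - 1) 0 + D w (g a) - 1) 0) l (𝓝 (max (s + w - 2) 0)) := by
  have hvalue : max (max (s - 1) 0 + w - 1) 0 = max (s + w - 2) 0 := by
    rcases le_total s 1 with hs | hs
    · rw [max_eq_right (show s - 1 ≤ 0 by linarith),
        max_eq_right (show 0 + w - 1 ≤ 0 by linarith [hw.2]),
        max_eq_right (show s + w - 2 ≤ 0 by linarith [hw.2])]
    · rw [max_eq_left (show 0 ≤ s - 1 by linarith)]
      ring_nf
  rw [← hvalue]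
  exact (((hD.tendsto_of_tendsto_one hw hg hlim).const_add _).sub_const 1).max tendsto_const_nhds

lemma cdf_map_eq_measureReal {Ω : Type*} [MeasurableSpace Ω] (μ : Measure Ω)
    [IsProbabilityMeasure μ] {f : Ω → ℝ} (hf : Measurable f) (t : ℝ) :
    cdf (μ.map f) t = μ.real {ω | f ω ≤ t} := by
  have := Measure.isProbabilityMeasure_map (μ := μ) hf.aemeasurable
  rw [cdf_eq_real, map_measureReal_apply hf measurableSet_Iic]
  rfl

lemma exists_cdf_eq_of_continuous (ν : Measure ℝ) (hν : Continuous (cdf ν)) {c : ℝ}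
    (hc : c ∈ Ioo 0 1) : ∃ x, cdf ν x = c :=
  mem_range_of_exists_le_of_exists_ge hν
    (((tendsto_cdf_atBot ν).eventually_lt_const hc.1).exists.imp fun _ => le_of_lt)
    (((tendsto_cdf_atTop ν).eventually_const_lt hc.2).exists.imp fun _ => le_of_lt)

lemma measureReal_add_add_le_one {Ω : Type*} [MeasurableSpace Ω] {P : Measure Ω}
    [IsProbabilityMeasure P] {s t u : Set Ω} (ht : NullMeasurableSet t P)
    (hu : NullMeasurableSet u P) (hst : AEDisjoint P s t) (hsu : AEDisjoint P s u)
    (htu : AEDisjoint P t u) : P.real s + P.real t + P.real u ≤ 1 := by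
  rw [← measureReal_union₀ ht hst, ← measureReal_union₀ hu (hsu.union_left htu)]
  exact measureReal_le_one

lemma tendsto_measureReal_inter_setOf_le_atTop {Ω : Type*} [MeasurableSpace Ω] (μ : Measure Ω)
    [IsFiniteMeasure μ] (s : Set Ω) (f : Ω → ℝ) :
    Tendsto (fun t => μ.real (s ∩ {ω | f ω ≤ t})) atTop (𝓝 (μ.real s)) := by
  have hmono : Monotone fun t => s ∩ {ω | f ω ≤ t} :=
    fun _ _ hst => inter_subset_inter_right s fun _ hω => le_trans hω hst
  have hunion : ⋃ t, s ∩ {ω | f ω ≤ t} = s := by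
    rw [← inter_iUnion, iUnion_eq_univ_iff.2 fun ω => ⟨f ω, le_refl (f ω)⟩, inter_univ]
  have hlim := tendsto_measure_iUnion_atTop (μ := μ) hmono
  rw [hunion] at hlim
  exact (ENNReal.tendsto_toReal (measure_ne_top μ s)).comp hlim

theorem not_lowerFrechet3_cdf {Ω : Type*} [MeasurableSpace Ω] (P : Measure Ω)
    [IsProbabilityMeasure P] {X₁ X₂ X₃ : Ω → ℝ} (hX₁ : Measurable X₁) (hX₂ : Measurable X₂)
    (hX₃ : Measurable X₃) (ν₁ ν₂ ν₃ : Measure ℝ) (hν₁ : Continuous (cdf ν₁))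
    (hν₂ : Continuous (cdf ν₂)) (hν₃ : Continuous (cdf ν₃)) :
    ¬ ∀ x₁ x₂ x₃, P.real {ω | X₁ ω ≤ x₁ ∧ X₂ ω ≤ x₂ ∧ X₃ ω ≤ x₃} =
      max (cdf ν₁ x₁ + cdf ν₂ x₂ + cdf ν₃ x₃ - 2) 0 := by
  intro hP
  set O : ℝ → ℝ → ℝ → Set Ω := fun x₁ x₂ x₃ => {ω | X₁ ω ≤ x₁ ∧ X₂ ω ≤ x₂ ∧ X₃ ω ≤ x₃}
  have hO : ∀ x₁ x₂ x₃, NullMeasurableSet (O x₁ x₂ x₃) P := fun x₁ x₂ x₃ =>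
    ((measurableSet_le hX₁ measurable_const).inter ((measurableSet_le hX₂ measurable_const).inter
      (measurableSet_le hX₃ measurable_const))).nullMeasurableSet
  have hnull : ∀ x₁ x₂ x₃, cdf ν₁ x₁ + cdf ν₂ x₂ + cdf ν₃ x₃ ≤ 2 → P (O x₁ x₂ x₃) = 0 := by
    intro x₁ x₂ x₃ h
    rw [← measureReal_eq_zero_iff, hP, max_eq_right (by linarith)]
  have hbig : ∀ x₁ x₂ x₃, 7 / 3 < cdf ν₁ x₁ + cdf ν₂ x₂ + cdf ν₃ x₃ →
      1 / 3 < P.real (O x₁ x₂ x₃) := by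
    intro x₁ x₂ x₃ h
    rw [hP]
    exact lt_max_of_lt_left (by linarith)
  have half_mem : (1 / 2 : ℝ) ∈ Ioo 0 1 := by norm_num
  obtain ⟨a₁, ha₁⟩ := exists_cdf_eq_of_continuous ν₁ hν₁ half_mem
  obtain ⟨a₂, ha₂⟩ := exists_cdf_eq_of_continuous ν₂ hν₂ half_mem
  obtain ⟨a₃, ha₃⟩ := exists_cdf_eq_of_continuous ν₃ hν₃ half_mem
  have near_one : (11 / 12 : ℝ) < 1 := by norm_num
  obtain ⟨b₁, hb₁⟩ := ((tendsto_cdf_atTop ν₁).eventually_const_lt near_one).exists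
  obtain ⟨b₂, hb₂⟩ := ((tendsto_cdf_atTop ν₂).eventually_const_lt near_one).exists
  obtain ⟨b₃, hb₃⟩ := ((tendsto_cdf_atTop ν₃).eventually_const_lt near_one).exists
  have hb₁_le := cdf_le_one ν₁ b₁
  have hb₂_le := cdf_le_one ν₂ b₂
  have hb₃_le := cdf_le_one ν₃ b₃
  have h₁₂ : AEDisjoint P (O a₁ b₂ b₃) (O b₁ a₂ b₃) := measure_mono_null (t := O a₁ a₂ b₃)
    (fun ω hω => ⟨hω.1.1, hω.2.2.1, hω.1.2.2⟩) (hnull a₁ a₂ b₃ (by linarith))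
  have h₁₃ : AEDisjoint P (O a₁ b₂ b₃) (O b₁ b₂ a₃) := measure_mono_null (t := O a₁ b₂ a₃)
    (fun ω hω => ⟨hω.1.1, hω.1.2.1, hω.2.2.2⟩) (hnull a₁ b₂ a₃ (by linarith))
  have h₂₃ : AEDisjoint P (O b₁ a₂ b₃) (O b₁ b₂ a₃) := measure_mono_null (t := O b₁ a₂ a₃)
    (fun ω hω => ⟨hω.1.1, hω.1.2.1, hω.2.2.2⟩) (hnull b₁ a₂ a₃ (by linarith))
  have hsum := measureReal_add_add_le_one (hO b₁ a₂ b₃) (hO b₁ b₂ a₃) h₁₂ h₁₃ h₂₃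
  linarith [hbig a₁ b₂ b₃ (by linarith), hbig b₁ a₂ b₃ (by linarith), hbig b₁ b₂ a₃ (by linarith)]

theorem lower_frechet_not_df_general
    (μX : Measure (ℝ × ℝ)) [IsProbabilityMeasure μX]
    (F₁ F₂ : ℝ → ℝ)
    (hF₁ : ∀ t, F₁ t = (μX {y | y.1 ≤ t}).toReal)
    (hF₂ : ∀ t, F₂ t = (μX {y | y.2 ≤ t}).toReal)
    (hc₁ : Continuous F₁) (hc₂ : Continuous F₂)
    (D₂ : ℝ → ℝ → ℝ) (hD₂ : IsCopula2 D₂)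
    (H : ℝ → ℝ → ℝ → ℝ → ℝ)
    (hH : ∀ x₁ x₂ x₃ x₄, H x₁ x₂ x₃ x₄ =
      max (max (F₁ x₁ + F₁ x₃ - 1) 0 + D₂ (F₂ x₂) (F₂ x₄) - 1) 0) :
    (∀ x₁ x₂ x₃, Tendsto (fun x₄ => H x₁ x₂ x₃ x₄) atTop
      (nhds (max (F₁ x₁ + F₁ x₃ + F₂ x₂ - 2) 0))) ∧
    ¬ ∃ μ : Measure (ℝ × ℝ × ℝ × ℝ), IsProbabilityMeasure μ ∧
        ∀ x₁ x₂ x₃ x₄, H x₁ x₂ x₃ x₄ =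
          (μ {y | y.1 ≤ x₁ ∧ y.2.1 ≤ x₂ ∧ y.2.2.1 ≤ x₃ ∧ y.2.2.2 ≤ x₄}).toReal := by
  obtain rfl : F₁ = cdf (μX.map Prod.fst) :=
    funext fun t => (hF₁ t).trans (cdf_map_eq_measureReal μX measurable_fst t).symm
  obtain rfl : F₂ = cdf (μX.map Prod.snd) :=
    funext fun t => (hF₂ t).trans (cdf_map_eq_measureReal μX measurable_snd t).symm
  have hlim : ∀ x₁ x₂ x₃, Tendsto (fun x₄ => H x₁ x₂ x₃ x₄) atTop
      (𝓝 (max (cdf (μX.map Prod.fst) x₁ + cdf (μX.map Prod.fst) x₃ +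
        cdf (μX.map Prod.snd) x₂ - 2) 0)) := fun x₁ x₂ x₃ => by
    simp only [hH]
    exact tendsto_lowerFrechet_copula hD₂ _ ⟨cdf_nonneg _ _, cdf_le_one _ _⟩
      (fun _ => ⟨cdf_nonneg _ _, cdf_le_one _ _⟩) (tendsto_cdf_atTop _)
  refine ⟨hlim, ?_⟩
  rintro ⟨μ, _, hμ⟩
  refine not_lowerFrechet3_cdf μ measurable_fst measurable_snd.fst measurable_snd.snd.fst
    _ _ _ hc₁ hc₂ hc₁ fun x₁ x₂ x₃ => ?_
  rw [add_right_comm]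
  refine tendsto_nhds_unique ?_ (hlim x₁ x₂ x₃)
  refine (tendsto_measureReal_inter_setOf_le_atTop μ _ fun y => y.2.2.2).congr fun x₄ => ?_
  rw [hμ, measureReal_def, ← ofPred_and]
  simp only [and_assoc]

/-- For `p = 2`, `C = D₁ = ` the lower Fréchet copula `(u+v−1)⁺` and any `2`-copula `D₂`,
the function `H(x) = C(D₁(F₁(x₁),F₁(x₃)), D₂(F₂(x₂),F₂(x₄)))` satisfies
`lim_{x₄→∞} H(x) = (F₁(x₁)+F₁(x₃)+F₂(x₂)−2)⁺`, and `H` is not a distribution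
function on `ℝ⁴`. (Here `F₁, F₂` are the continuous marginal distribution functions
of `X = (X₁, X₂)`.) -/
theorem lower_frechet_not_df
    (μX : Measure (ℝ × ℝ)) [IsProbabilityMeasure μX]
    (F₁ F₂ : ℝ → ℝ)
    (hF₁ : ∀ t, F₁ t = (μX {y | y.1 ≤ t}).toReal)
    (hF₂ : ∀ t, F₂ t = (μX {y | y.2 ≤ t}).toReal)
    (hc₁ : Continuous F₁) (hc₂ : Continuous F₂)
    (hSklar : ∀ x : ℝ × ℝ,
      (μX {y | y.1 ≤ x.1 ∧ y.2 ≤ x.2}).toReal = max (F₁ x.1 + F₂ x.2 - 1) 0)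
    (D₂ : ℝ → ℝ → ℝ) (hD₂ : IsCopula2 D₂)
    (H : ℝ → ℝ → ℝ → ℝ → ℝ)
    (hH : ∀ x₁ x₂ x₃ x₄, H x₁ x₂ x₃ x₄ =
      max (max (F₁ x₁ + F₁ x₃ - 1) 0 + D₂ (F₂ x₂) (F₂ x₄) - 1) 0) :
    (∀ x₁ x₂ x₃, Tendsto (fun x₄ => H x₁ x₂ x₃ x₄) atTop
      (nhds (max (F₁ x₁ + F₁ x₃ + F₂ x₂ - 2) 0))) ∧
    ¬ ∃ μ : Measure (ℝ × ℝ × ℝ × ℝ), IsProbabilityMeasure μ ∧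
        ∀ x₁ x₂ x₃ x₄, H x₁ x₂ x₃ x₄ =
          (μ {y | y.1 ≤ x₁ ∧ y.2.1 ≤ x₂ ∧ y.2.2.1 ≤ x₃ ∧ y.2.2.2 ≤ x₄}).toReal :=
  lower_frechet_not_df_general μX F₁ F₂ hF₁ hF₂ hc₁ hc₂ D₂ hD₂ H hH
end

section
/- Let L(X) be the mixture P(X ∈ A₁×⋯×A_p) = ∫_Θ Π_{i=1}^p Q_i(A_i, θ) γ(dθ), where each Q_i(·,θ) has density f_i(·,θ) with respect to a σ-finite measure ν_i. Then q(y₁,...,y_{2p}) = ∫_Θ Π_{i=1}^p f_i(y_i,θ) Π_{i=1}^p f_i(y_{p+i},θ) γ(dθ) is the density (with respect to (ν₁×⋯×ν_p)²) of a probability measure λ on ℝ^{2p} with λ ∈ Λ, i.e., λ is F-invariant and its first-p marginal is L(X). -/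
open MeasureTheory Set
open scoped ENNReal

/-!
By Tonelli's theorem, and Fubini's theorem for products of functions of separate coordinates,
the measure with density `q` gives a box `C × D` the mass
`∫ ∏ Q_i(C_i, θ) ∏ Q_i(D_i, θ) γ(dθ)`. At `C = D = ℝ^p` this is `1`, at `D = ℝ^p` it is the
mixture formula for `L(X)`, and a swap `f_S` only exchanges the factors `Q_i(C_i, θ)` and
`Q_i(D_i, θ)` for `i ∈ S`. Boxes form a generating π-system, so finite measures agreeing on
them are equal.
-/

namespace MeasureTheory

theorem lintegral_fin_nat_prod_eq_prod {n : ℕ} {E : Fin n → Type*}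
    {mE : ∀ i, MeasurableSpace (E i)} {μ : (i : Fin n) → Measure (E i)} [∀ i, SigmaFinite (μ i)]
    {f : (i : Fin n) → E i → ℝ≥0∞} (hf : ∀ i, Measurable (f i)) :
    ∫⁻ x, ∏ i, f i (x i) ∂Measure.pi μ = ∏ i, ∫⁻ x, f i x ∂μ i := by
  induction n with
  | zero => simp
  | succ n ih =>
    let g : E 0 × ((j : Fin n) → E (Fin.succAbove 0 j)) → ℝ≥0∞ :=
      fun y ↦ f 0 y.1 * ∏ j, f (Fin.succAbove 0 j) (y.2 j)
    calc
      _ = ∫⁻ x, g (MeasurableEquiv.piFinSuccAbove E 0 x) ∂Measure.pi μ := by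
        simp_rw [Fin.prod_univ_succAbove _ 0]; rfl
      _ = ∫⁻ y, g y ∂(μ 0).prod (Measure.pi fun j ↦ μ (Fin.succAbove 0 j)) :=
        (measurePreserving_piFinSuccAbove μ 0).lintegral_comp_emb
          (MeasurableEquiv.measurableEmbedding _) g
      _ = (∫⁻ x, f 0 x ∂μ 0) * ∏ j, ∫⁻ x, f (Fin.succAbove 0 j) x ∂μ (Fin.succAbove 0 j) := by
        rw [← ih fun j ↦ hf _]
        exact lintegral_prod_mul (hf 0).aemeasurable
          (Finset.measurable_prod _ fun j _ ↦ (hf _).comp (measurable_pi_apply j)).aemeasurable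
      _ = ∏ i, ∫⁻ x, f i x ∂μ i :=
        (Fin.prod_univ_succAbove (fun i ↦ ∫⁻ x, f i x ∂μ i) 0).symm

theorem lintegral_fintype_prod_eq_prod {ι : Type*} [Fintype ι] {E : ι → Type*}
    {mE : ∀ i, MeasurableSpace (E i)} {μ : (i : ι) → Measure (E i)} [∀ i, SigmaFinite (μ i)]
    {f : (i : ι) → E i → ℝ≥0∞} (hf : ∀ i, Measurable (f i)) :
    ∫⁻ x, ∏ i, f i (x i) ∂Measure.pi μ = ∏ i, ∫⁻ x, f i x ∂μ i := by
  let e := (Fintype.equivFin ι).symm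
  rw [← (measurePreserving_piCongrLeft _ e).lintegral_comp_emb
    (MeasurableEquiv.measurableEmbedding _)]
  simp_rw [← e.prod_comp, MeasurableEquiv.coe_piCongrLeft, Equiv.piCongrLeft_apply_apply]
  exact lintegral_fin_nat_prod_eq_prod fun i ↦ hf (e i)

theorem Measure.ext_of_univ_pi {ι : Type*} [Finite ι] {X : ι → Type*}
    [∀ i, MeasurableSpace (X i)] {μ μ' : Measure (∀ i, X i)} [IsFiniteMeasure μ]
    (h : ∀ C : ∀ i, Set (X i), (∀ i, MeasurableSet (C i)) → μ (univ.pi C) = μ' (univ.pi C)) :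
    μ = μ' := by
  refine ext_of_generate_finite _ generateFrom_pi.symm isPiSystem_pi ?_ ?_
  · rintro _ ⟨C, hC, rfl⟩
    exact h C fun i ↦ hC i (mem_univ i)
  · simpa using h (fun _ ↦ univ) fun _ ↦ .univ

theorem Measure.ext_of_univ_pi_prod_univ_pi {ι κ : Type*} [Finite ι] [Finite κ]
    {X : ι → Type*} {Y : κ → Type*} [∀ i, MeasurableSpace (X i)] [∀ k, MeasurableSpace (Y k)]
    {μ μ' : Measure ((∀ i, X i) × ∀ k, Y k)} [IsFiniteMeasure μ]
    (h : ∀ (C : ∀ i, Set (X i)) (D : ∀ k, Set (Y k)), (∀ i, MeasurableSet (C i)) →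
      (∀ k, MeasurableSet (D k)) → μ (univ.pi C ×ˢ univ.pi D) = μ' (univ.pi C ×ˢ univ.pi D)) :
    μ = μ' := by
  refine ext_of_generate_finite _ (generateFrom_eq_prod generateFrom_pi generateFrom_pi
    (.pi fun _ ↦ isCountablySpanning_measurableSet)
    (.pi fun _ ↦ isCountablySpanning_measurableSet)).symm (isPiSystem_pi.prod isPiSystem_pi) ?_ ?_
  · rintro _ ⟨_, ⟨C, hC, rfl⟩, _, ⟨D, hD, rfl⟩, rfl⟩
    exact h C D (fun i ↦ hC i (mem_univ i)) fun k ↦ hD k (mem_univ k)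
  · simpa using h (fun _ ↦ univ) (fun _ ↦ univ) (fun _ ↦ .univ) fun _ ↦ .univ

end MeasureTheory

theorem Measurable.finset_piecewise {ι α : Type*} {X : ι → Type*} [∀ i, MeasurableSpace (X i)]
    [MeasurableSpace α] {F G : α → ∀ i, X i}
    (S : Finset ι) [∀ i, Decidable (i ∈ S)] (hF : Measurable F) (hG : Measurable G) :
    Measurable fun a ↦ S.piecewise (F a) (G a) :=
  measurable_pi_lambda _ fun i ↦ by
    simp only [Finset.piecewise]
    split_ifs
    exacts [(measurable_pi_apply i).comp hF, (measurable_pi_apply i).comp hG]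

noncomputable section Mixture

variable {ι Θ : Type*} [Fintype ι] {X : ι → Type*} [∀ i, MeasurableSpace (X i)]
  [MeasurableSpace Θ] {ν : ∀ i, Measure (X i)} [∀ i, SigmaFinite (ν i)]
  {f : ∀ i, X i → Θ → ℝ≥0∞} {γ : Measure Θ}

def prodDensity (f : ∀ i, X i → Θ → ℝ≥0∞) (x : ∀ i, X i) (θ : Θ) : ℝ≥0∞ :=
  ∏ i, f i (x i) θ

variable (ν f γ) in
def pairMixture : Measure ((∀ i, X i) × ∀ i, X i) :=
  ((Measure.pi ν).prod (Measure.pi ν)).withDensity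
    fun z ↦ ∫⁻ θ, prodDensity f z.1 θ * prodDensity f z.2 θ ∂γ

theorem measurable_prodDensity (hf : ∀ i, Measurable (Function.uncurry (f i))) :
    Measurable (Function.uncurry (prodDensity f)) :=
  Finset.measurable_prod _ fun i _ ↦
    (hf i).comp ((measurable_pi_apply i).comp measurable_fst |>.prodMk measurable_snd)

theorem setLIntegral_prodDensity_univ_pi (hf : ∀ i, Measurable (Function.uncurry (f i)))
    (C : ∀ i, Set (X i)) (θ : Θ) :
    ∫⁻ x in univ.pi C, prodDensity f x θ ∂Measure.pi ν = ∏ i, ∫⁻ t in C i, f i t θ ∂ν i := by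
  rw [Measure.restrict_pi_pi]
  exact lintegral_fintype_prod_eq_prod fun i ↦ (hf i).comp measurable_prodMk_right

theorem pairMixture_univ_pi_prod_univ_pi [SFinite γ]
    (hf : ∀ i, Measurable (Function.uncurry (f i))) (C D : ∀ i, Set (X i)) :
    pairMixture ν f γ (univ.pi C ×ˢ univ.pi D) =
      ∫⁻ θ, (∏ i, ∫⁻ t in C i, f i t θ ∂ν i) * ∏ i, ∫⁻ t in D i, f i t θ ∂ν i ∂γ := by
  have hP := measurable_prodDensity hf
  have hPθ (θ : Θ) : Measurable fun x ↦ prodDensity f x θ := hP.comp measurable_prodMk_right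
  rw [pairMixture, withDensity_apply', ← Measure.prod_restrict, lintegral_lintegral_swap]
  · refine lintegral_congr fun θ ↦ ?_
    rw [lintegral_prod_mul (hPθ θ).aemeasurable (hPθ θ).aemeasurable,
      setLIntegral_prodDensity_univ_pi hf, setLIntegral_prodDensity_univ_pi hf]
  · exact ((hP.comp (measurable_fst.fst.prodMk measurable_snd)).mul
      (hP.comp (measurable_fst.snd.prodMk measurable_snd))).aemeasurable

theorem isProbabilityMeasure_pairMixture [IsProbabilityMeasure γ]
    (hf : ∀ i, Measurable (Function.uncurry (f i))) (hfprob : ∀ i θ, ∫⁻ t, f i t θ ∂ν i = 1) :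
    IsProbabilityMeasure (pairMixture ν f γ) := by
  constructor
  simpa [hfprob] using pairMixture_univ_pi_prod_univ_pi (ν := ν) (γ := γ) hf
    (fun _ ↦ univ) (fun _ ↦ univ)

theorem map_swap_pairMixture [IsProbabilityMeasure γ]
    (hf : ∀ i, Measurable (Function.uncurry (f i))) (hfprob : ∀ i θ, ∫⁻ t, f i t θ ∂ν i = 1)
    (S : Finset ι) [∀ i, Decidable (i ∈ S)] :
    (pairMixture ν f γ).map (fun z ↦ (S.piecewise z.2 z.1, S.piecewise z.1 z.2)) =
      pairMixture ν f γ := by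
  have := isProbabilityMeasure_pairMixture (ν := ν) (γ := γ) hf hfprob
  have hswap : Measurable fun z : (∀ i, X i) × ∀ i, X i ↦
      (S.piecewise z.2 z.1, S.piecewise z.1 z.2) :=
    (measurable_snd.finset_piecewise S measurable_fst).prodMk
      (measurable_fst.finset_piecewise S measurable_snd)
  refine Measure.ext_of_univ_pi_prod_univ_pi fun C D hC hD ↦ ?_
  have hpre : (fun z : (∀ i, X i) × ∀ i, X i ↦ (S.piecewise z.2 z.1, S.piecewise z.1 z.2)) ⁻¹'
      (univ.pi C ×ˢ univ.pi D) = univ.pi (S.piecewise D C) ×ˢ univ.pi (S.piecewise C D) := by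
    ext z
    simp only [mem_preimage, mem_prod, mem_univ_pi, ← forall_and]
    refine forall_congr' fun i ↦ ?_
    by_cases hi : i ∈ S <;> simp [hi, and_comm]
  rw [Measure.map_apply hswap ((MeasurableSet.univ_pi hC).prod (.univ_pi hD)), hpre,
    pairMixture_univ_pi_prod_univ_pi hf, pairMixture_univ_pi_prod_univ_pi hf]
  refine lintegral_congr fun θ ↦ ?_
  rw [← Finset.prod_mul_distrib, ← Finset.prod_mul_distrib]
  refine Finset.prod_congr rfl fun i _ ↦ ?_
  by_cases hi : i ∈ S <;> simp [hi, mul_comm]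

theorem map_fst_pairMixture_univ_pi [SFinite γ]
    (hf : ∀ i, Measurable (Function.uncurry (f i))) (hfprob : ∀ i θ, ∫⁻ t, f i t θ ∂ν i = 1)
    {A : ∀ i, Set (X i)} (hA : ∀ i, MeasurableSet (A i)) :
    (pairMixture ν f γ).map Prod.fst (univ.pi A) =
      ∫⁻ θ, ∏ i, ∫⁻ t in A i, f i t θ ∂ν i ∂γ := by
  rw [Measure.map_apply measurable_fst (.univ_pi hA), ← prod_univ,
    ← pi_univ univ, pairMixture_univ_pi_prod_univ_pi hf]
  simp [hfprob]

end Mixture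

theorem mixture_knockoff_general {Θ : Type*} [MeasurableSpace Θ] (p : ℕ)
    (γ : Measure Θ) [IsProbabilityMeasure γ]
    (ν : Fin p → Measure ℝ) [∀ i, SigmaFinite (ν i)]
    (f : Fin p → ℝ → Θ → ℝ≥0∞)
    (hf : ∀ i, Measurable (Function.uncurry (f i)))
    (hfprob : ∀ i θ, ∫⁻ t, f i t θ ∂(ν i) = 1)
    (μX : Measure (Fin p → ℝ))
    (hmix : ∀ A : Fin p → Set ℝ, (∀ i, MeasurableSet (A i)) →
      μX {x | ∀ i, x i ∈ A i} = ∫⁻ θ, ∏ i, ∫⁻ t in A i, f i t θ ∂(ν i) ∂γ)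
    (lam : Measure ((Fin p → ℝ) × (Fin p → ℝ)))
    (hlam : lam = ((Measure.pi ν).prod (Measure.pi ν)).withDensity
      (fun z => ∫⁻ θ, (∏ i, f i (z.1 i) θ) * ∏ i, f i (z.2 i) θ ∂γ)) :
    IsProbabilityMeasure lam ∧
    (∀ S : Finset (Fin p), lam.map (swapMap p S) = lam) ∧
    lam.map Prod.fst = μX := by
  obtain rfl : lam = pairMixture ν f γ := hlam
  have hprob := isProbabilityMeasure_pairMixture hf hfprob (ν := ν) (γ := γ)
  refine ⟨hprob, fun S ↦ map_swap_pairMixture hf hfprob S, ?_⟩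
  refine Measure.ext_of_univ_pi fun A hA ↦ ?_
  rw [map_fst_pairMixture_univ_pi hf hfprob hA, ← hmix A hA]
  congr 1
  ext
  exact mem_univ_pi.symm

/-- Mixture model: if `L(X)` is the `γ`-mixture of products `∏ Q_i(·,θ)`, where
`Q_i(·,θ)` has density `f_i(·,θ)` w.r.t. a σ-finite `ν_i`, then
`q(y) = ∫_Θ ∏ f_i(y_i,θ) ∏ f_i(y_{p+i},θ) γ(dθ)` is the density w.r.t. `(ν₁×⋯×ν_p)²`
of a probability measure `λ` which is `F`-invariant with first-`p` marginal `L(X)`,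
i.e. `λ ∈ Λ`. -/
theorem mixture_knockoff {Θ : Type*} [MeasurableSpace Θ] (p : ℕ) (hp : 2 ≤ p)
    (γ : Measure Θ) [IsProbabilityMeasure γ]
    (ν : Fin p → Measure ℝ) [∀ i, SigmaFinite (ν i)]
    (f : Fin p → ℝ → Θ → ℝ≥0∞)
    (hf : ∀ i, Measurable (Function.uncurry (f i)))
    (hfprob : ∀ i θ, ∫⁻ t, f i t θ ∂(ν i) = 1)
    (μX : Measure (Fin p → ℝ)) [IsProbabilityMeasure μX]
    (hmix : ∀ A : Fin p → Set ℝ, (∀ i, MeasurableSet (A i)) →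
      μX {x | ∀ i, x i ∈ A i} = ∫⁻ θ, ∏ i, ∫⁻ t in A i, f i t θ ∂(ν i) ∂γ)
    (lam : Measure ((Fin p → ℝ) × (Fin p → ℝ)))
    (hlam : lam = ((Measure.pi ν).prod (Measure.pi ν)).withDensity
      (fun z => ∫⁻ θ, (∏ i, f i (z.1 i) θ) * ∏ i, f i (z.2 i) θ ∂γ)) :
    IsProbabilityMeasure lam ∧
    (∀ S : Finset (Fin p), lam.map (swapMap p S) = lam) ∧
    lam.map Prod.fst = μX :=
  mixture_knockoff_general p γ ν f hf hfprob μX hmix lam hlam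
end

section
/- Let X be a p-variate random vector whose law is absolutely continuous with respect to Lebesgue measure on ℝ^p, let U be uniform on (0,1)^p independent of X, and define X^{(n)}_i = ([n X_i] + U_i)/n where [·] is the integer part. Then sup_{A Borel ⊆ ℝ^p} |P(X ∈ A) − P(X^{(n)} ∈ A)| → 0 as n → ∞. -/
/-!
Given `X = x`, the discretized vector `X⁽ⁿ⁾` is uniform on the grid cell of side `1/n` containing
`x`. Summing over cells, its law has density `hₙ(z) = nᵖ P(X ∈ cell containing z)`, the average
of the density `h` of `X` over a cube of side `1/n` around `z`. By Lebesgue's differentiation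
theorem `hₙ → h` a.e., Scheffé's lemma upgrades this to `‖h - hₙ‖₁ → 0`, and `‖h - hₙ‖₁` bounds
the total variation distance.
-/

open MeasureTheory Set Filter Topology Metric ProbabilityTheory
open scoped ENNReal

theorem tendsto_integral_abs_sub_of_tendsto_ae {α ι : Type*} [MeasurableSpace α]
    {μ : Measure α} {l : Filter ι} [l.IsCountablyGenerated] {f : α → ℝ} {g : ι → α → ℝ}
    (hf : Integrable f μ) (hg : ∀ᶠ i in l, Integrable (g i) μ)
    (hg_nonneg : ∀ᶠ i in l, 0 ≤ᵐ[μ] g i)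
    (hg_integral : ∀ᶠ i in l, ∫ x, g i x ∂μ = ∫ x, f x ∂μ)
    (hlim : ∀ᵐ x ∂μ, Tendsto (fun i => g i x) l (𝓝 (f x))) :
    Tendsto (fun i => ∫ x, |f x - g i x| ∂μ) l (𝓝 0) := by
  have hpos : Tendsto (fun i => ∫ x, max (f x - g i x) 0 ∂μ) l (𝓝 0) := by
    have := tendsto_integral_filter_of_dominated_convergence (μ := μ) (fun x => |f x|)
      (hg.mono fun i hi => ((hf.sub hi).aestronglyMeasurable.sup aestronglyMeasurable_const))
      (hg_nonneg.mono fun i hi => hi.mono fun x (hx : 0 ≤ g i x) => by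
        rw [Real.norm_eq_abs, abs_of_nonneg (le_max_right _ _)]
        exact max_le (by simp only [Pi.sub_apply]; linarith [le_abs_self (f x)]) (abs_nonneg _))
      hf.abs (hlim.mono fun x hx => (tendsto_const_nhds.sub hx).max tendsto_const_nhds)
    simpa using this
  -- `|a| = 2 a⁺ - a`, and `∫ (f - g i) = 0`.
  have hsplit : ∀ᶠ i in l, 2 * ∫ x, max (f x - g i x) 0 ∂μ = ∫ x, |f x - g i x| ∂μ := by
    filter_upwards [hg, hg_integral] with i hi hi_integral
    have hdiff : Integrable (fun x => f x - g i x) μ := hf.sub hi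
    have hmax : Integrable (fun x => max (f x - g i x) 0) μ := hdiff.pos_part
    have habs : ∀ x, |f x - g i x| = 2 * max (f x - g i x) 0 - (f x - g i x) := by
      intro x
      rcases le_total (g i x) (f x) with h | h
      · rw [max_eq_left (by linarith), abs_of_nonneg (by linarith)]; ring
      · rw [max_eq_right (by linarith), abs_of_nonpos (by linarith)]; ring
    rw [integral_congr_ae (ae_of_all _ habs), integral_sub (hmax.const_mul 2) hdiff,
      integral_const_mul, integral_sub hf hi, hi_integral, sub_self, sub_zero]
  simpa using (hpos.const_mul 2).congr' hsplit

theorem abs_toReal_sub_le_integral_abs_rnDeriv_sub {α : Type*} [MeasurableSpace α]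
    {ρ μ ν : Measure α} [SigmaFinite ρ] [IsFiniteMeasure μ] [IsFiniteMeasure ν]
    (hμ : μ ≪ ρ) (hν : ν ≪ ρ) (A : Set α) :
    |(μ A).toReal - (ν A).toReal|
      ≤ ∫ x, |(μ.rnDeriv ρ x).toReal - (ν.rnDeriv ρ x).toReal| ∂ρ := by
  have hint := Measure.integrable_toReal_rnDeriv (μ := μ) (ν := ρ) |>.sub
    (Measure.integrable_toReal_rnDeriv (μ := ν) (ν := ρ))
  rw [← measureReal_def, ← measureReal_def, ← Measure.setIntegral_toReal_rnDeriv hμ,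
    ← Measure.setIntegral_toReal_rnDeriv hν,
    ← integral_sub Measure.integrable_toReal_rnDeriv.integrableOn
      Measure.integrable_toReal_rnDeriv.integrableOn]
  exact abs_integral_le_integral_abs.trans
    (setIntegral_le_integral hint.abs (ae_of_all _ fun _ => abs_nonneg _))

theorem eventually_abs_measure_sub_le_of_ae_tendsto_rnDeriv {α ι : Type*} [MeasurableSpace α]
    {l : Filter ι} [l.IsCountablyGenerated] {ρ μ : Measure α} {ν : ι → Measure α} [SigmaFinite ρ]
    [IsProbabilityMeasure μ] [∀ i, IsProbabilityMeasure (ν i)] (hμ : μ ≪ ρ)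
    (hν : ∀ᶠ i in l, ν i ≪ ρ)
    (hlim : ∀ᵐ x ∂ρ, Tendsto (fun i => (ν i).rnDeriv ρ x) l (𝓝 (μ.rnDeriv ρ x)))
    {ε : ℝ} (hε : 0 < ε) :
    ∀ᶠ i in l, ∀ A, |(μ A).toReal - (ν i A).toReal| ≤ ε := by
  have hL1 := tendsto_integral_abs_sub_of_tendsto_ae (μ := ρ) (l := l)
    (f := fun x => (μ.rnDeriv ρ x).toReal) (g := fun i x => ((ν i).rnDeriv ρ x).toReal)
    Measure.integrable_toReal_rnDeriv
    (Eventually.of_forall fun _ => Measure.integrable_toReal_rnDeriv)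
    (Eventually.of_forall fun _ => ae_of_all _ fun _ => ENNReal.toReal_nonneg)
    (hν.mono fun i hi => by
      simp [Measure.integral_toReal_rnDeriv hi, Measure.integral_toReal_rnDeriv hμ])
    (by
      filter_upwards [hlim, μ.rnDeriv_lt_top ρ] with x hx hx_fin
      exact (ENNReal.tendsto_toReal hx_fin.ne).comp hx)
  filter_upwards [hν, (tendsto_order.1 hL1).2 ε hε] with i hi hi_small A
  exact (abs_toReal_sub_le_integral_abs_rnDeriv_sub hμ hi A).trans hi_small.le

theorem lintegral_comp_eq_tsum {α β : Type*} [MeasurableSpace α] [MeasurableSpace β] [Countable β]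
    [MeasurableSingletonClass β] {φ : α → β} (hφ : Measurable φ) (μ : Measure α) (f : β → ℝ≥0∞) :
    ∫⁻ x, f (φ x) ∂μ = ∑' k, f k * μ (φ ⁻¹' {k}) := by
  rw [← lintegral_map (measurable_of_countable f) hφ, lintegral_countable']
  simp_rw [Measure.map_apply hφ (measurableSet_singleton _)]

theorem lintegral_measure_inter_fiber {α β : Type*} [MeasurableSpace α] [MeasurableSpace β]
    [Countable β] [MeasurableSingletonClass β] {φ : α → β} (hφ : Measurable φ) (μ ρ : Measure α)
    (A : Set α) :
    ∫⁻ x, ρ (A ∩ φ ⁻¹' {φ x}) ∂μ = ∫⁻ z in A, μ (φ ⁻¹' {φ z}) ∂ρ := by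
  rw [lintegral_comp_eq_tsum hφ μ fun k => ρ (A ∩ φ ⁻¹' {k}),
    lintegral_comp_eq_tsum hφ (ρ.restrict A) fun k => μ (φ ⁻¹' {k})]
  congr 1 with k
  rw [Measure.restrict_apply (hφ (measurableSet_singleton k)), inter_comm, mul_comm]

section Grid

variable {ι : Type*}

noncomputable def gridIndex (n : ℕ) (x : ι → ℝ) : ι → ℤ := fun i => ⌊(n : ℝ) * x i⌋

def gridCell (n : ℕ) (x : ι → ℝ) : Set (ι → ℝ) := gridIndex n ⁻¹' {gridIndex n x}

noncomputable def gridCenter (n : ℕ) (x : ι → ℝ) : ι → ℝ :=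
  fun i => (gridIndex n x i + 2⁻¹) / n

theorem measurable_gridIndex (n : ℕ) : Measurable (gridIndex (ι := ι) n) :=
  measurable_pi_lambda _ fun i => ((measurable_pi_apply i).const_mul _).floor

theorem gridIndex_eq_iff {n : ℕ} (hn : 0 < n) {z : ι → ℝ} {k : ι → ℤ} :
    gridIndex n z = k ↔ z ∈ univ.pi fun i => Ico ((k i : ℝ) / n) ((k i + 1) / n) := by
  have hn' : (0 : ℝ) < n := by exact_mod_cast hn
  simp only [gridIndex, funext_iff, mem_univ_pi, mem_Ico, Int.floor_eq_iff, div_le_iff₀ hn',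
    lt_div_iff₀ hn', mul_comm (n : ℝ)]

theorem gridCell_eq_pi_Ico {n : ℕ} (hn : 0 < n) (x : ι → ℝ) : gridCell n x =
    univ.pi fun i => Ico ((gridIndex n x i : ℝ) / n) ((gridIndex n x i + 1) / n) := by
  ext z; exact gridIndex_eq_iff hn

noncomputable def discretize (n : ℕ) (x u : ι → ℝ) : ι → ℝ :=
  fun i => (gridIndex n x i + u i) / n

theorem measurable_discretize (n : ℕ) :
    Measurable (Function.uncurry (discretize (ι := ι) n)) := by
  refine measurable_pi_lambda _ fun i => ?_
  have hk : Measurable fun q : (ι → ℝ) × (ι → ℝ) => (gridIndex n q.1 i : ℝ) :=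
    (measurable_of_countable _).comp ((measurable_pi_apply i).comp
      ((measurable_gridIndex n).comp measurable_fst))
  exact (hk.add ((measurable_pi_apply i).comp measurable_snd)).div_const _

variable [Fintype ι]

theorem closedBall_gridCenter {n : ℕ} (hn : 0 < n) (x : ι → ℝ) :
    closedBall (gridCenter n x) (2 * n : ℝ)⁻¹ =
      Icc (fun i => (gridIndex n x i : ℝ) / n) (fun i => (gridIndex n x i + 1) / n) := by
  have hn' : (0 : ℝ) < n := by exact_mod_cast hn
  rw [closedBall_pi _ (by positivity), ← pi_univ_Icc]
  refine pi_congr rfl fun i _ => ?_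
  rw [Real.closedBall_eq_Icc, gridCenter]
  congr 1 <;> field_simp <;> ring

theorem mem_closedBall_gridCenter {n : ℕ} (hn : 0 < n) (x : ι → ℝ) :
    x ∈ closedBall (gridCenter n x) (2 * n : ℝ)⁻¹ := by
  rw [closedBall_gridCenter hn, ← pi_univ_Icc]
  refine pi_mono (fun i _ => Ico_subset_Icc_self) ?_
  rw [← gridCell_eq_pi_Ico hn]
  exact rfl

theorem gridCell_ae_eq_closedBall {n : ℕ} (hn : 0 < n) (x : ι → ℝ) :
    gridCell n x =ᵐ[volume] closedBall (gridCenter n x) (2 * n : ℝ)⁻¹ := by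
  rw [gridCell_eq_pi_Ico hn, closedBall_gridCenter hn, volume_pi]
  exact Measure.univ_pi_Ico_ae_eq_Icc

theorem volume_closedBall_inv_two_mul {n : ℕ} (hn : 0 < n) (w : ι → ℝ) :
    volume (closedBall w (2 * n : ℝ)⁻¹) = ((n : ℝ≥0∞) ^ Fintype.card ι)⁻¹ := by
  have hn' : (0 : ℝ) < n := by exact_mod_cast hn
  have hdiam : 2 * (2 * n : ℝ)⁻¹ = (n : ℝ)⁻¹ := by field_simp
  rw [Real.volume_pi_closedBall _ (by positivity), hdiam, ENNReal.ofReal_pow (by positivity),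
    ENNReal.ofReal_inv_of_pos hn', ENNReal.ofReal_natCast, ENNReal.inv_pow]

noncomputable def cellDensity (μ : Measure (ι → ℝ)) (n : ℕ) (x : ι → ℝ) : ℝ≥0∞ :=
  (n : ℝ≥0∞) ^ Fintype.card ι * μ (gridCell n x)

theorem measurable_cellDensity (μ : Measure (ι → ℝ)) (n : ℕ) : Measurable (cellDensity μ n) :=
  (measurable_of_countable fun k => (n : ℝ≥0∞) ^ Fintype.card ι * μ (gridIndex n ⁻¹' {k})).comp
    (measurable_gridIndex n)

theorem ae_tendsto_cellDensity (μ : Measure (ι → ℝ)) [IsLocallyFiniteMeasure μ]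
    (hμ : μ ≪ volume) :
    ∀ᵐ x, Tendsto (fun n => cellDensity μ n x) atTop (𝓝 (μ.rnDeriv volume x)) := by
  -- In the sup norm of `ι → ℝ`, the cell of `x` is a.e. the closed ball of radius `1/(2n)`
  -- around its centre, so this is Lebesgue differentiation along balls shrinking to `x`.
  filter_upwards [(IsUnifLocDoublingMeasure.vitaliFamily volume 1).ae_tendsto_rnDeriv μ] with x hx
  have hradius : Tendsto (fun n : ℕ => (2 * n : ℝ)⁻¹) atTop (𝓝[>] (0 : ℝ)) := by
    refine tendsto_nhdsWithin_iff.2 ⟨?_, ?_⟩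
    · exact tendsto_inv_atTop_zero.comp
        ((tendsto_natCast_atTop_atTop (R := ℝ)).const_mul_atTop two_pos)
    · filter_upwards [eventually_gt_atTop 0] with n hn
      exact mem_Ioi.2 (by positivity)
  have hmem : ∀ᶠ n : ℕ in atTop, x ∈ closedBall (gridCenter n x) (1 * (2 * n : ℝ)⁻¹) := by
    filter_upwards [eventually_gt_atTop 0] with n hn
    rw [one_mul]
    exact mem_closedBall_gridCenter hn x
  refine (hx.comp (IsUnifLocDoublingMeasure.tendsto_closedBall_filterAt volume
    (fun n => gridCenter n x) _ hradius hmem)).congr' ?_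
  filter_upwards [eventually_gt_atTop 0] with n hn
  rw [Function.comp_apply, volume_closedBall_inv_two_mul hn, cellDensity,
    measure_congr (hμ.ae_le (gridCell_ae_eq_closedBall hn x)), ENNReal.div_eq_inv_mul, inv_inv]

theorem map_volume_smul_add {n : ℕ} (hn : 0 < n) (v : ι → ℝ) :
    (volume : Measure (ι → ℝ)).map (fun u => (n : ℝ)⁻¹ • (v + u))
      = (n : ℝ≥0∞) ^ Fintype.card ι • volume := by
  have hn' : (0 : ℝ) < n := by exact_mod_cast hn
  have : (fun u : ι → ℝ => (n : ℝ)⁻¹ • (v + u)) = ((n : ℝ)⁻¹ • ·) ∘ (v + ·) := rfl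
  rw [this, ← Measure.map_map (measurable_const_smul _) (measurable_const_add v),
    map_add_left_eq_self, Measure.map_addHaar_smul _ (by positivity),
    Module.finrank_fintype_fun_eq_card, inv_pow, inv_inv, abs_of_pos (by positivity),
    ENNReal.ofReal_pow hn'.le, ENNReal.ofReal_natCast]

theorem map_unitCube_shift_div {n : ℕ} (hn : 0 < n) (k : ι → ℤ) :
    (Measure.pi fun _ : ι => volume.restrict (Ioo (0 : ℝ) 1)).map
        (fun u i => ((k i : ℝ) + u i) / n)
      = (n : ℝ≥0∞) ^ Fintype.card ι • volume.restrict (gridIndex n ⁻¹' {k}) := by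
  have hf : (fun (u : ι → ℝ) i => ((k i : ℝ) + u i) / n) =
      fun u => (n : ℝ)⁻¹ • ((fun i => (k i : ℝ)) + u) := by
    ext u i; simp [div_eq_inv_mul]
  have hpre : (fun (u : ι → ℝ) i => ((k i : ℝ) + u i) / n) ⁻¹' (gridIndex n ⁻¹' {k}) =
      univ.pi fun _ => Ico 0 1 := by
    ext u
    have hn' : (n : ℝ) ≠ 0 := by positivity
    simp only [mem_preimage, gridIndex, mem_singleton_iff, funext_iff, mul_div_cancel₀ _ hn',
      Int.floor_intCast_add, add_eq_left, Int.floor_eq_zero_iff, mem_univ_pi]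
  have hmeas : Measurable fun (u : ι → ℝ) i => ((k i : ℝ) + u i) / n := by
    rw [hf]; fun_prop
  have hae : (univ.pi fun _ : ι => Ioo (0 : ℝ) 1) =ᵐ[volume] univ.pi fun _ => Ico 0 1 := by
    rw [volume_pi]
    exact Measure.univ_pi_Ioo_ae_eq_Icc.trans Measure.univ_pi_Ico_ae_eq_Icc.symm
  rw [← Measure.restrict_pi_pi, ← volume_pi, Measure.restrict_congr_set hae, ← hpre,
    ← Measure.restrict_map hmeas ((measurable_gridIndex n) (measurableSet_singleton k)), hf,
    map_volume_smul_add hn, Measure.restrict_smul]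

theorem map_discretize {Ω : Type*} [MeasurableSpace Ω] {P : Measure Ω} [IsFiniteMeasure P]
    {X U : Ω → ι → ℝ} (hX : Measurable X) (hU : Measurable U)
    (hUlaw : P.map U = Measure.pi fun _ => volume.restrict (Ioo (0 : ℝ) 1))
    (hindep : IndepFun X U P) {n : ℕ} (hn : 0 < n) :
    P.map (fun ω => discretize n (X ω) (U ω)) = volume.withDensity (cellDensity (P.map X) n) := by
  set ν := Measure.pi fun _ : ι => volume.restrict (Ioo (0 : ℝ) 1)
  have hjoint : P.map (fun ω => (X ω, U ω)) = (P.map X).prod ν := by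
    rw [← hUlaw]
    exact (indepFun_iff_map_prod_eq_prod_map_map hX.aemeasurable hU.aemeasurable).1 hindep
  have hcomp : (fun ω => discretize n (X ω) (U ω)) =
      Function.uncurry (discretize n) ∘ fun ω => (X ω, U ω) := rfl
  ext A hA
  rw [hcomp, ← Measure.map_map (measurable_discretize n) (hX.prodMk hU), hjoint,
    Measure.map_apply (measurable_discretize n) hA,
    Measure.prod_apply (measurable_discretize n hA), withDensity_apply _ hA]
  calc ∫⁻ x, ν (Prod.mk x ⁻¹' (Function.uncurry (discretize n) ⁻¹' A)) ∂P.map X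
      = ∫⁻ x, (n : ℝ≥0∞) ^ Fintype.card ι * volume (A ∩ gridCell n x) ∂P.map X := by
        refine lintegral_congr fun x => ?_
        have hlaw : ν.map (discretize n x) = _ := map_unitCube_shift_div hn (gridIndex n x)
        change ν (discretize n x ⁻¹' A) = _
        rw [← Measure.map_apply (measurable_discretize n).of_uncurry_left hA, hlaw,
          Measure.smul_apply, smul_eq_mul, Measure.restrict_apply hA]
        rfl
    _ = ∫⁻ z in A, cellDensity (P.map X) n z := by
        simp only [cellDensity, gridCell]
        rw [lintegral_const_mul' _ _ (by simp),
          lintegral_measure_inter_fiber (measurable_gridIndex n),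
          ← lintegral_const_mul' _ _ (by simp)]

end Grid

theorem discretization_total_variation_general {Ω : Type*} [MeasurableSpace Ω]
    (P : Measure Ω) [IsProbabilityMeasure P] (p : ℕ)
    (X U : Ω → (Fin p → ℝ)) (hX : Measurable X) (hU : Measurable U)
    (habs : P.map X ≪ Measure.pi (fun _ => (volume : Measure ℝ)))
    (hUlaw : P.map U = Measure.pi (fun _ => volume.restrict (Set.Ioo (0:ℝ) 1)))
    (hindep : IndepFun X U P)
    (Xn : ℕ → Ω → (Fin p → ℝ))
    (hXn : ∀ n ω i, Xn n ω i = ((⌊(n : ℝ) * X ω i⌋ : ℝ) + U ω i) / (n : ℝ)) :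
    ∀ ε > (0:ℝ), ∃ N : ℕ, ∀ n ≥ N, ∀ A : Set (Fin p → ℝ), MeasurableSet A →
      |(P.map X A).toReal - (P.map (Xn n) A).toReal| ≤ ε := by
  intro ε hε
  have hXn_eq : ∀ n, Xn n = fun ω => discretize n (X ω) (U ω) := fun n =>
    funext fun ω => funext (hXn n ω)
  have : IsProbabilityMeasure (P.map X) := Measure.isProbabilityMeasure_map hX.aemeasurable
  have : ∀ n, IsProbabilityMeasure (P.map (Xn n)) := fun n => by
    rw [hXn_eq n]
    exact Measure.isProbabilityMeasure_map
      ((measurable_discretize n).comp (hX.prodMk hU)).aemeasurable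
  have hμ : P.map X ≪ volume := by rwa [volume_pi]
  have hlaw : ∀ n, 0 < n → P.map (Xn n) = volume.withDensity (cellDensity (P.map X) n) :=
    fun n hn => hXn_eq n ▸ map_discretize hX hU hUlaw hindep hn
  have hrnDeriv : ∀ n, 0 < n →
      (P.map (Xn n)).rnDeriv volume =ᵐ[volume] cellDensity (P.map X) n := fun n hn =>
    hlaw n hn ▸ Measure.rnDeriv_withDensity _ (measurable_cellDensity _ n)
  have hlim : ∀ᵐ x, Tendsto (fun n => (P.map (Xn n)).rnDeriv volume x) atTop
      (𝓝 ((P.map X).rnDeriv volume x)) := by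
    filter_upwards [ae_all_iff.2 fun n => hrnDeriv (n + 1) n.succ_pos,
      ae_tendsto_cellDensity _ hμ] with x hx hx_lim
    refine (tendsto_add_atTop_iff_nat 1).1 ?_
    simpa only [hx] using (tendsto_add_atTop_iff_nat 1).2 hx_lim
  obtain ⟨N, hN⟩ := eventually_atTop.1 <| eventually_abs_measure_sub_le_of_ae_tendsto_rnDeriv hμ
    ((eventually_gt_atTop 0).mono fun n hn => hlaw n hn ▸ withDensity_absolutelyContinuous _ _)
    hlim hε
  exact ⟨N, fun n hn A _ => hN n hn A⟩

/-- Discretization approximation: if `L(X) ≪ m_p`, `U` is uniform on `(0,1)^p`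
independent of `X`, and `X^{(n)}_i = ([n X_i] + U_i)/n`, then the total variation
distance `sup_A |P(X ∈ A) − P(X^{(n)} ∈ A)|` tends to `0`. -/
theorem discretization_total_variation {Ω : Type*} [MeasurableSpace Ω]
    (P : Measure Ω) [IsProbabilityMeasure P] (p : ℕ) (hp : 1 ≤ p)
    (X U : Ω → (Fin p → ℝ)) (hX : Measurable X) (hU : Measurable U)
    (habs : P.map X ≪ Measure.pi (fun _ => (volume : Measure ℝ)))
    (hUlaw : P.map U = Measure.pi (fun _ => volume.restrict (Set.Ioo (0:ℝ) 1)))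
    (hindep : IndepFun X U P)
    (Xn : ℕ → Ω → (Fin p → ℝ))
    (hXn : ∀ n ω i, Xn n ω i = ((⌊(n : ℝ) * X ω i⌋ : ℝ) + U ω i) / (n : ℝ)) :
    ∀ ε > (0:ℝ), ∃ N : ℕ, ∀ n ≥ N, ∀ A : Set (Fin p → ℝ), MeasurableSet A →
      |(P.map X A).toReal - (P.map (Xn n) A).toReal| ≤ ε :=
  discretization_total_variation_general P p X U hX hU habs hUlaw hindep Xn hXn
end
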